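/- arXiv:1910.04648 — 2 statements merged into one kernel-verified Lean document; each statement's English description precedes it below -/
import Mathlib

section
/- Let a be a Nash equilibrium allocation in an identical-resource RSG with common quota q, and let c be a coalition such that for every pair of resources i ∈ H(a) and i' ∈ L(a), |a_i ∩ c| ≤ |a_{i'} ∩ c| + 1. Then a is c-stable: coalition c has no Pareto-improving deviation at a. -/
variable {N M : Type*}

/-- Number of agents assigned to resource `i` at allocation `a`. -/
def load [Fintype N] [DecidableEq M] (a : N → M) (i : M) : ℕ :=
  (Finset.univ.filter (fun j => a j = i)).card

/-- The cost incurred by agent `j` at allocation `a` for cost profile `f`. -/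
def cost [Fintype N] [DecidableEq M] (f : M → ℕ → ℕ) (a : N → M) (j : N) : ℕ :=
  f (a j) (load a (a j))

/-- The maximum cost over resources at allocation `a`. -/
def maxcost [Fintype N] [Fintype M] [DecidableEq M] (f : M → ℕ → ℕ) (a : N → M) : ℕ :=
  Finset.univ.sup (fun i => f i (load a i))

/-- The minmaxcost `α` of the RSG: minimum over allocations of the maxcost. -/
noncomputable def minmax (N : Type*) [Fintype N] [Fintype M] [DecidableEq M] (f : M → ℕ → ℕ) : ℕ :=
  sInf (Set.range (maxcost (N := N) f))

/-- The quota of resource `i`: the largest `t` with `f i t ≤ α`. -/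
noncomputable def quota (f : M → ℕ → ℕ) (α : ℕ) (i : M) : ℕ :=
  sSup {t | f i t ≤ α}

/-- `a` is a Nash equilibrium: no single agent can strictly decrease its cost
by switching to another resource. -/
def Nash [Fintype N] [DecidableEq M] (f : M → ℕ → ℕ) (a : N → M) : Prop :=
  ∀ j : N, ∀ i : M, i ≠ a j → cost f a j ≤ f i (load a i + 1)

/-- `a` is `c`-stable: coalition `c` has no deviation making every member weakly
better off and some member strictly better off. -/
def cStable [Fintype N] [DecidableEq N] [DecidableEq M]
    (f : M → ℕ → ℕ) (a : N → M) (c : Finset N) : Prop :=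
  ¬ ∃ b : N → M, (∀ j ∉ c, b j = a j) ∧
      (∀ j ∈ c, cost f b j ≤ cost f a j) ∧ (∃ j ∈ c, cost f b j < cost f a j)

/-!
At a Nash equilibrium of identical resources every load is `K` or `K - 1`, where `K` is the
maximum load, and `K` is the quota. Along a Pareto-improving deviation of `c` no member's load
rises, so no resource ends above `K`, and every member of `c` that ends on a resource of load `K`
started on one; the strictly improving member, if it started there, does not end there. Let `F`
be the resources that go from `K - 1` to `K` and `R` those that drop from `K` below `K`, and let
`s ≤ 1` indicate whether the strictly improving member started at load `K`. Counting members of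
`c` gives `|c ∩ F| + |F| + s ≤ |c ∩ R|`; conservation of the total load gives `|R| + 1 ≤ |F| + s`.
The hypothesis says each resource of `R` carries at most one more member of `c` than each resource
of `F`, which together with `|R| ≤ |F|` gives `|c ∩ R| ≤ |c ∩ F| + |R|`, a contradiction.
-/

open Finset

theorem Finset.sum_le_sum_add_card_of_le_add_one {ι : Type*} {s t : Finset ι} {x : ι → ℕ}
    (hcard : #s ≤ #t) (hx : ∀ i ∈ s, ∀ i' ∈ t, x i ≤ x i' + 1) :
    ∑ i ∈ s, x i ≤ ∑ i ∈ t, x i + #s := by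
  obtain rfl | hs := s.eq_empty_or_nonempty
  · simp
  have ht : t.Nonempty := card_pos.mp (hs.card_pos.trans_le hcard)
  obtain ⟨i₀, hi₀, hmin⟩ := exists_min_image t x ht
  calc ∑ i ∈ s, x i ≤ #s * (x i₀ + 1) := by
        simpa using sum_le_card_nsmul s x (x i₀ + 1) fun i hi => hx i hi i₀ hi₀
    _ = #s * x i₀ + #s := by ring
    _ ≤ #t * x i₀ + #s := by gcongr
    _ ≤ ∑ i ∈ t, x i + #s := by
        gcongr
        simpa using card_nsmul_le_sum t x (x i₀) hmin

def memberLoad [DecidableEq M] (c : Finset N) (a : N → M) (i : M) : ℕ :=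
  #{j ∈ c | a j = i}

theorem card_filter_comp_eq_sum_memberLoad [Fintype M] [DecidableEq M] (c : Finset N)
    (g : N → M) (P : M → Prop) [DecidablePred P] :
    #{j ∈ c | P (g j)} = ∑ i with P i, memberLoad c g i := by
  rw [card_eq_sum_card_fiberwise (f := g) (t := {i | P i}) fun j hj => by
    simpa using (mem_filter.mp hj).2]
  refine sum_congr rfl fun i hi => congrArg card ?_
  rw [filter_filter]
  exact filter_congr fun j _ => ⟨And.right, fun h => ⟨h ▸ (mem_filter.mp hi).2, h⟩⟩

section Loads

variable [Fintype N] [DecidableEq M]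

theorem sum_load [Fintype M] (a : N → M) : ∑ i, load a i = Fintype.card N :=
  (card_eq_sum_card_fiberwise fun j _ => mem_univ (a j)).symm

def maxLoad [Fintype M] (a : N → M) : ℕ :=
  univ.sup (load a)

theorem load_le_maxLoad [Fintype M] (a : N → M) (i : M) : load a i ≤ maxLoad a :=
  le_sup (mem_univ i)

theorem exists_load_eq_maxLoad [Fintype M] [Nonempty M] (a : N → M) :
    ∃ i, load a i = maxLoad a := by
  obtain ⟨i, -, hi⟩ := exists_mem_eq_sup univ univ_nonempty (load a)
  exact ⟨i, hi.symm⟩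

theorem load_add_memberLoad [DecidableEq N] {a b : N → M} {c : Finset N}
    (hout : ∀ j ∉ c, b j = a j) (i : M) :
    load b i + memberLoad c a i = load a i + memberLoad c b i := by
  have hsplit (g : N → M) : load g i = memberLoad c g i + memberLoad cᶜ g i := by
    rw [memberLoad, memberLoad, ← card_union_of_disjoint
      (disjoint_filter_filter disjoint_compl_right), ← filter_union, union_compl]
    rfl
  have hrest : memberLoad cᶜ b i = memberLoad cᶜ a i := by
    refine congrArg card (filter_congr fun j hj => ?_)
    rw [hout j (mem_compl.mp hj)]
  rw [hsplit a, hsplit b, hrest]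
  ring

theorem load_le_of_weakly_improving [DecidableEq N] {a b : N → M} {c : Finset N} {K : ℕ}
    (hmax : ∀ i, load a i ≤ K) (hout : ∀ j ∉ c, b j = a j)
    (hweak : ∀ j ∈ c, load b (b j) ≤ load a (a j)) (i : M) : load b i ≤ K := by
  obtain ⟨j, hj⟩ | hempty := ({j ∈ c | b j = i} : Finset N).eq_empty_or_nonempty.symm
  · obtain ⟨hjc, rfl⟩ := mem_filter.mp hj
    exact (hweak j hjc).trans (hmax _)
  · have := load_add_memberLoad hout i
    have := hmax i
    simp only [memberLoad, hempty, card_empty] at *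
    omega

end Loads

section Balanced

variable [Fintype N] [Fintype M] [DecidableEq M]

theorem Nash.maxLoad_le_load_add_one {f : ℕ → ℕ} (hmono : StrictMono f) {a : N → M}
    (hNash : Nash (fun _ : M => f) a) (i : M) : maxLoad a ≤ load a i + 1 := by
  refine Finset.sup_le fun i' _ => ?_
  obtain ⟨j, hj⟩ | hempty := (univ.filter fun j => a j = i').eq_empty_or_nonempty.symm
  · obtain rfl := (mem_filter.mp hj).2
    by_cases hi : i = a j
    · rw [hi]; omega
    · exact hmono.le_iff_le.mp (hNash j i hi)
  · simp [load, hempty]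

theorem exists_maxLoad_le_load [Nonempty M] {a : N → M} (hbal : ∀ i, maxLoad a ≤ load a i + 1)
    (b : N → M) : ∃ i, maxLoad a ≤ load b i := by
  by_contra! hlt
  obtain ⟨imax, himax⟩ := exists_load_eq_maxLoad a
  have : ∑ i, load b i < ∑ i, load a i :=
    sum_lt_sum (fun i _ => by have := hlt i; have := hbal i; omega)
      ⟨imax, mem_univ _, by rw [himax]; exact hlt imax⟩
  rw [sum_load, sum_load] at this
  exact lt_irrefl _ this

theorem maxcost_eq_apply_maxLoad [Nonempty M] {f : ℕ → ℕ} (hmono : Monotone f) (a : N → M) :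
    maxcost (fun _ : M => f) a = f (maxLoad a) := by
  rw [maxcost, maxLoad, ← sup'_eq_sup univ_nonempty, ← sup'_eq_sup univ_nonempty,
    apply_sup'_eq_sup'_comp univ_nonempty f fun x y => hmono.map_sup x y]
  rfl

theorem minmax_eq_apply_maxLoad [Nonempty M] {f : ℕ → ℕ} (hmono : StrictMono f) {a : N → M}
    (hbal : ∀ i, maxLoad a ≤ load a i + 1) :
    minmax N (fun _ : M => f) = f (maxLoad a) := by
  refine le_antisymm (Nat.sInf_le ⟨a, maxcost_eq_apply_maxLoad hmono.monotone a⟩) ?_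
  refine le_csInf (Set.range_nonempty _) ?_
  rintro _ ⟨b, rfl⟩
  obtain ⟨i, hi⟩ := exists_maxLoad_le_load hbal b
  rw [maxcost_eq_apply_maxLoad hmono.monotone]
  exact hmono.monotone (hi.trans (load_le_maxLoad b i))

end Balanced

theorem quota_const_apply_eq {f : ℕ → ℕ} (hmono : StrictMono f) (k : ℕ) (i : M) :
    quota (fun _ : M => f) (f k) i = k := by
  have : {t | f t ≤ f k} = Set.Iic k := Set.ext fun _ => hmono.le_iff_le
  rw [quota, this, csSup_Iic]

section Deviation

variable [Fintype N] [Fintype M] [DecidableEq M]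

def filled (a b : N → M) (K : ℕ) : Finset M :=
  {i | load a i < K ∧ load b i = K}

def relieved (a b : N → M) (K : ℕ) : Finset M :=
  {i | load a i = K ∧ load b i < K}

variable [DecidableEq N] {a b : N → M} {c : Finset N} {K : ℕ}
  (hmax : ∀ i, load a i ≤ K) (hbal : ∀ i, K ≤ load a i + 1)
  (hout : ∀ j ∉ c, b j = a j) (hweak : ∀ j ∈ c, load b (b j) ≤ load a (a j))
include hmax hbal hout hweak

theorem sum_memberLoad_filled_add_le {j₀ : N} (hj₀ : j₀ ∈ c)
    (hlt : load b (b j₀) < load a (a j₀)) :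
    ∑ i ∈ filled a b K, memberLoad c a i + #(filled a b K) +
        (if load a (a j₀) = K then 1 else 0) ≤ ∑ i ∈ relieved a b K, memberLoad c a i := by
  have hsub : {j ∈ c | load b (b j) = K} ⊆ {j ∈ c | load a (a j) = K} := fun j hj => by
    simp only [mem_filter] at hj ⊢
    have := hweak j hj.1; have := hmax (a j)
    exact ⟨hj.1, by omega⟩
  have hcount : #{j ∈ c | load b (b j) = K} + (if load a (a j₀) = K then 1 else 0) ≤
      #{j ∈ c | load a (a j) = K} := by
    split_ifs with h
    · have hj₀S : j₀ ∈ ({j ∈ c | load a (a j) = K} : Finset N) := mem_filter.mpr ⟨hj₀, h⟩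
      have hsub' :
          {j ∈ c | load b (b j) = K} ⊆ ({j ∈ c | load a (a j) = K} : Finset N).erase j₀ :=
        fun j hj => mem_erase.mpr
          ⟨fun hjj => by rw [hjj] at hj; have := (mem_filter.mp hj).2; omega, hsub hj⟩
      have := card_le_card hsub'
      rw [card_erase_of_mem hj₀S] at this
      have := card_pos.mpr ⟨j₀, hj₀S⟩
      omega
    · simpa using card_le_card hsub
  rw [card_filter_comp_eq_sum_memberLoad c b (fun i => load b i = K),
    card_filter_comp_eq_sum_memberLoad c a (fun i => load a i = K)] at hcount
  -- On a resource that ends at load `K`, `c` gains exactly the load increase: `1` on `filled`.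
  have hpt (i : M) :
      (if load b i = K then memberLoad c b i else 0) +
        (if load a i = K ∧ load b i < K then memberLoad c a i else 0) =
      (if load a i = K then memberLoad c a i else 0) +
        ((if load a i < K ∧ load b i = K then memberLoad c a i else 0) +
          if load a i < K ∧ load b i = K then 1 else 0) := by
    have := load_add_memberLoad hout i
    have := load_le_of_weakly_improving hmax hout hweak i
    have := hmax i; have := hbal i
    split_ifs <;> omega
  have hsum := sum_congr rfl fun i (_ : i ∈ univ) => hpt i
  simp only [sum_add_distrib, ← sum_filter, sum_const, smul_eq_mul, mul_one] at hsum
  rw [filled, relieved]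
  omega

theorem card_relieved_add_one_le {j₀ : N} (hlt : load b (b j₀) < load a (a j₀)) :
    #(relieved a b K) + 1 ≤ #(filled a b K) + (if load a (a j₀) = K then 1 else 0) := by
  have hpt (i : M) :
      load b i + (if load a i = K ∧ load b i < K then 1 else 0) +
          (if i = b j₀ then 1 - (if load a (a j₀) = K then 1 else 0) else 0) ≤
        load a i + if load a i < K ∧ load b i = K then 1 else 0 := by
    have := load_le_of_weakly_improving hmax hout hweak i
    have := hmax i; have := hbal i; have := hmax (a j₀)
    by_cases hi : i = b j₀
    · subst hi; split_ifs <;> omega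
    · split_ifs <;> omega
  have hsum := sum_le_sum fun i (_ : i ∈ univ) => hpt i
  simp only [sum_add_distrib, sum_ite_eq', mem_univ, if_true, sum_boole, Nat.cast_id,
    sum_load] at hsum
  rw [filled, relieved]
  split_ifs at hsum ⊢ <;> omega

theorem exists_relieved_filled_memberLoad_lt {j₀ : N} (hj₀ : j₀ ∈ c)
    (hlt : load b (b j₀) < load a (a j₀)) :
    ∃ i ∈ relieved a b K, ∃ i' ∈ filled a b K, memberLoad c a i' + 1 < memberLoad c a i := by
  by_contra! hcond
  have hA := sum_memberLoad_filled_add_le hmax hbal hout hweak hj₀ hlt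
  have hB := card_relieved_add_one_le hmax hbal hout hweak hlt
  have hspread := sum_le_sum_add_card_of_le_add_one (by split_ifs at hB <;> omega) hcond
  split_ifs at hA hB <;> omega

end Deviation

theorem identical_sufficient_stability_general [Fintype N] [DecidableEq N]
    [Fintype M] [DecidableEq M] [Nonempty M]
    (f : ℕ → ℕ) (hmono : StrictMono f)
    (q : ℕ) (hq : q = quota (fun _ : M => f) (minmax N (fun _ : M => f)) (Classical.arbitrary M))
    (a : N → M) (hNash : Nash (fun _ : M => f) a)
    (c : Finset N)
    (hcond : ∀ i i' : M, load a i = q → load a i' = q - 1 →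
      (c.filter (fun j => a j = i)).card ≤ (c.filter (fun j => a j = i')).card + 1) :
    cStable (fun _ : M => f) a c := by
  have hbal := hNash.maxLoad_le_load_add_one hmono
  obtain rfl : q = maxLoad a := by
    rw [hq, minmax_eq_apply_maxLoad hmono hbal, quota_const_apply_eq hmono]
  rintro ⟨b, hout, hweak, j₀, hj₀, hlt⟩
  obtain ⟨i, hi, i', hi', hgt⟩ := exists_relieved_filled_memberLoad_lt (load_le_maxLoad a) hbal
    hout (fun j hj => hmono.le_iff_le.mp (hweak j hj)) hj₀ (hmono.lt_iff_lt.mp hlt)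
  simp only [relieved, filled, mem_filter, mem_univ, true_and] at hi hi'
  have := hbal i'
  exact (hcond i i' hi.1 (by omega)).not_gt hgt

/-- In an identical-resource RSG, a Nash equilibrium `a` is `c`-stable provided that for
every high resource `i` and low resource `i'`, the number of members of `c` on `i`
exceeds the number on `i'` by at most one. -/
theorem identical_sufficient_stability [Fintype N] [DecidableEq N]
    [Fintype M] [DecidableEq M] [Nonempty M]
    (f : ℕ → ℕ) (hmono : StrictMono f) (hzero : f 0 = 0)
    (q : ℕ) (hq : q = quota (fun _ : M => f) (minmax N (fun _ : M => f)) (Classical.arbitrary M))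
    (a : N → M) (hNash : Nash (fun _ : M => f) a)
    (c : Finset N)
    (hcond : ∀ i i' : M, load a i = q → load a i' = q - 1 →
      (c.filter (fun j => a j = i)).card ≤ (c.filter (fun j => a j = i')).card + 1) :
    cStable (fun _ : M => f) a c :=
  identical_sufficient_stability_general f hmono q hq a hNash c hcond
end

section
/- Consider the two-resource RSG with N = {1,...,6}, f_1(1)=1, f_1(2)=2, f_1(3)=4 and f_2(1)=1, f_2(2)=2, f_2(3)=3, f_2(4)=4, with the contiguous coalition structure C consisting of all singletons together with {1,2},{3,4},{5,6},{1,2,3},{4,5,6}. Then no allocation is C-stable; hence a contiguous equilibrium need not exist in a two-resource RSG. -/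
variable {N M : Type*}

lemma two (x : Fin 2) : x = 0 ∨ x = 1 := by omega

lemma load_eq (a : Fin 6 → Fin 2) (i : Fin 2) :
    load a i = (if a 0 = i then 1 else 0) + (if a 1 = i then 1 else 0)
      + (if a 2 = i then 1 else 0) + (if a 3 = i then 1 else 0)
      + (if a 4 = i then 1 else 0) + (if a 5 = i then 1 else 0) := by
  rw [load, Finset.card_filter, Fin.sum_univ_six]

lemma loadsum (a : Fin 6 → Fin 2) : load a 0 + load a 1 = 6 := by
  rw [load_eq a 0, load_eq a 1]
  rcases two (a 0) with h0|h0 <;> rcases two (a 1) with h1|h1 <;>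
    rcases two (a 2) with h2|h2 <;> rcases two (a 3) with h3|h3 <;>
    rcases two (a 4) with h4|h4 <;> rcases two (a 5) with h5|h5 <;>
    simp [h0, h1, h2, h3, h4, h5]

lemma load_update_add (a : Fin 6 → Fin 2) (x : Fin 6) (i : Fin 2) (h : a x ≠ i) :
    load (Function.update a x i) i = load a i + 1 := by
  unfold load
  have : (Finset.univ.filter (fun j => Function.update a x i j = i))
      = insert x (Finset.univ.filter (fun j => a j = i)) := by
    ext j
    by_cases hj : j = x <;> simp [hj, Function.update_apply, h]
  rw [this, Finset.card_insert_of_notMem (by simp [h])]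

lemma load_update_sub (a : Fin 6 → Fin 2) (x : Fin 6) (i j : Fin 2)
    (h : a x = j) (hij : i ≠ j) :
    load (Function.update a x i) j + 1 = load a j := by
  unfold load
  have : (Finset.univ.filter (fun k => a k = j))
      = insert x (Finset.univ.filter (fun k => Function.update a x i k = j)) := by
    ext k
    by_cases hk : k = x <;> simp [hk, Function.update_apply, h, hij]
  rw [this, Finset.card_insert_of_notMem (by simp [Function.update_apply, hij])]

lemma exists_on (a : Fin 6 → Fin 2) (i : Fin 2) (h : 0 < load a i) : ∃ x, a x = i := by
  obtain ⟨x, hx⟩ := Finset.card_pos.mp h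
  exact ⟨x, (Finset.mem_filter.mp hx).2⟩

section Lemmas

variable (f : Fin 2 → ℕ → ℕ) (a : Fin 6 → Fin 2)

lemma single_dev0 (hmono : ∀ i, StrictMono (f i))
    (hf1 : f 0 1 = 1 ∧ f 0 2 = 2 ∧ f 0 3 = 4)
    (hf2 : f 1 1 = 1 ∧ f 1 2 = 2 ∧ f 1 3 = 3 ∧ f 1 4 = 4)
    (x : Fin 6) (hx : a x = 0) (hl : 4 ≤ load a 0) :
    ¬ cStable f a {x} := by
  intro h
  apply h
  set b := Function.update a x 1 with hb
  have hsum := loadsum a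
  have hb1 : load b 1 = load a 1 + 1 := load_update_add a x 1 (by simp [hx])
  have hb1' : load b 1 ≤ 3 := by omega
  have c1 : cost f b x = f 1 (load b 1) := by
    rw [cost, hb, Function.update_self]
  have c2 : cost f a x = f 0 (load a 0) := by rw [cost, hx]
  have h1 : f 1 (load b 1) ≤ f 1 3 := (hmono 1).monotone hb1'
  have h2 : f 0 3 < f 0 (load a 0) := hmono 0 (by omega)
  refine ⟨b, ?_, ?_, ⟨x, by simp, by omega⟩⟩
  · intro j hj
    exact Function.update_of_ne (by simpa using hj) _ _
  · intro j hj
    simp at hj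
    subst hj
    omega

lemma single_dev1 (hmono : ∀ i, StrictMono (f i))
    (hf1 : f 0 1 = 1 ∧ f 0 2 = 2 ∧ f 0 3 = 4)
    (hf2 : f 1 1 = 1 ∧ f 1 2 = 2 ∧ f 1 3 = 3 ∧ f 1 4 = 4)
    (x : Fin 6) (hx : a x = 1) (hl : 5 ≤ load a 1) :
    ¬ cStable f a {x} := by
  intro h
  apply h
  set b := Function.update a x 0 with hb
  have hsum := loadsum a
  have hb0 : load b 0 = load a 0 + 1 := load_update_add a x 0 (by simp [hx])
  have hb0' : load b 0 ≤ 2 := by omega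
  have c1 : cost f b x = f 0 (load b 0) := by rw [cost, hb, Function.update_self]
  have c2 : cost f a x = f 1 (load a 1) := by rw [cost, hx]
  have h1 : f 0 (load b 0) ≤ f 0 2 := (hmono 0).monotone hb0'
  have h2 : f 1 4 < f 1 (load a 1) := hmono 1 (by omega)
  refine ⟨b, ?_, ?_, ⟨x, by simp, by omega⟩⟩
  · intro j hj
    exact Function.update_of_ne (by simpa using hj) _ _
  · intro j hj
    simp at hj
    subst hj
    omega

lemma pair_dev_on1
    (hf1 : f 0 1 = 1 ∧ f 0 2 = 2 ∧ f 0 3 = 4)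
    (hf2 : f 1 1 = 1 ∧ f 1 2 = 2 ∧ f 1 3 = 3 ∧ f 1 4 = 4)
    (x y : Fin 6) (hxy : x ≠ y) (hx : a x = 1) (hy : a y = 1)
    (h0 : load a 0 = 2) : ¬ cStable f a {x, y} := by
  intro h
  apply h
  have hsum := loadsum a
  set b := Function.update a x 0 with hb
  have hb0 : load b 0 = 3 := by rw [hb, load_update_add a x 0 (by simp [hx])]; omega
  have hb1 : load b 1 = 3 := by
    have := load_update_sub a x 0 1 hx (by decide); rw [hb]; omega
  have cx : cost f b x = 4 := by
    rw [cost, hb, Function.update_self, ← hb, hb0]; exact hf1.2.2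
  have cax : cost f a x = 4 := by
    rw [cost, hx]
    have : load a 1 = 4 := by omega
    rw [this]; exact hf2.2.2.2
  have cy : cost f b y = 3 := by
    rw [cost, hb, Function.update_of_ne (Ne.symm hxy), ← hb, hy, hb1]
    exact hf2.2.2.1
  have cay : cost f a y = 4 := by
    rw [cost, hy]
    have : load a 1 = 4 := by omega
    rw [this]; exact hf2.2.2.2
  refine ⟨b, ?_, ?_, ⟨y, by simp, by omega⟩⟩
  · intro j hj
    simp at hj
    exact Function.update_of_ne hj.1 _ _
  · intro j hj
    simp at hj
    rcases hj with rfl | rfl <;> omega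

lemma pair_dev_on0
    (hf1 : f 0 1 = 1 ∧ f 0 2 = 2 ∧ f 0 3 = 4)
    (hf2 : f 1 1 = 1 ∧ f 1 2 = 2 ∧ f 1 3 = 3 ∧ f 1 4 = 4)
    (x y : Fin 6) (hxy : x ≠ y) (hx : a x = 0) (hy : a y = 0)
    (h0 : load a 0 = 3) : ¬ cStable f a {x, y} := by
  intro h
  apply h
  have hsum := loadsum a
  set b := Function.update a x 1 with hb
  have hb1 : load b 1 = 4 := by rw [hb, load_update_add a x 1 (by simp [hx])]; omega
  have hb0 : load b 0 = 2 := by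
    have := load_update_sub a x 1 0 hx (by decide); rw [hb]; omega
  have cx : cost f b x = 4 := by
    rw [cost, hb, Function.update_self, ← hb, hb1]; exact hf2.2.2.2
  have cax : cost f a x = 4 := by rw [cost, hx, h0]; exact hf1.2.2
  have cy : cost f b y = 2 := by
    rw [cost, hb, Function.update_of_ne (Ne.symm hxy), ← hb, hy, hb0]
    exact hf1.2.1
  have cay : cost f a y = 4 := by rw [cost, hy, h0]; exact hf1.2.2
  refine ⟨b, ?_, ?_, ⟨y, by simp, by omega⟩⟩
  · intro j hj
    simp at hj
    exact Function.update_of_ne hj.1 _ _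
  · intro j hj
    simp at hj
    rcases hj with rfl | rfl <;> omega

lemma triple_dev
    (hf1 : f 0 1 = 1 ∧ f 0 2 = 2 ∧ f 0 3 = 4)
    (hf2 : f 1 1 = 1 ∧ f 1 2 = 2 ∧ f 1 3 = 3 ∧ f 1 4 = 4)
    (c : Finset (Fin 6)) (x y z : Fin 6)
    (hxy : x ≠ y) (hxz : x ≠ z) (hyz : y ≠ z) (hc : c = {x, y, z})
    (hx : a x = 0) (hy : a y = 0) (hz : a z = 1)
    (h0 : load a 0 = 3) : ¬ cStable f a c := by
  intro h
  apply h
  have hsum := loadsum a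
  set b1 := Function.update a x 1 with hb1d
  set b2 := Function.update b1 y 1 with hb2d
  set b := Function.update b2 z 0 with hbd
  have e1y : b1 y = 0 := by rw [hb1d, Function.update_of_ne (Ne.symm hxy), hy]
  have e1z : b1 z = 1 := by rw [hb1d, Function.update_of_ne (Ne.symm hxz), hz]
  have e2z : b2 z = 1 := by rw [hb2d, Function.update_of_ne (Ne.symm hyz), e1z]
  have l11 : load b1 1 = load a 1 + 1 := load_update_add a x 1 (by simp [hx])
  have l10 : load b1 0 + 1 = load a 0 := load_update_sub a x 1 0 hx (by decide)
  have l21 : load b2 1 = load b1 1 + 1 := load_update_add b1 y 1 (by simp [e1y])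
  have l20 : load b2 0 + 1 = load b1 0 := load_update_sub b1 y 1 0 e1y (by decide)
  have lb0 : load b 0 = load b2 0 + 1 := load_update_add b2 z 0 (by simp [e2z])
  have lb1 : load b 1 + 1 = load b2 1 := load_update_sub b2 z 0 1 e2z (by decide)
  have hlb0 : load b 0 = 2 := by omega
  have hlb1 : load b 1 = 4 := by omega
  have ebx : b x = 1 := by
    rw [hbd, Function.update_of_ne hxz, hb2d]
    by_cases hxy' : x = y
    · exact absurd hxy' hxy
    · rw [Function.update_of_ne hxy', hb1d, Function.update_self]
  have eby : b y = 1 := by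
    rw [hbd, Function.update_of_ne hyz, hb2d, Function.update_self]
  have ebz : b z = 0 := by rw [hbd, Function.update_self]
  have cbx : cost f b x = 4 := by rw [cost, ebx, hlb1]; exact hf2.2.2.2
  have cby : cost f b y = 4 := by rw [cost, eby, hlb1]; exact hf2.2.2.2
  have cbz : cost f b z = 2 := by rw [cost, ebz, hlb0]; exact hf1.2.1
  have cax : cost f a x = 4 := by rw [cost, hx, h0]; exact hf1.2.2
  have cay : cost f a y = 4 := by rw [cost, hy, h0]; exact hf1.2.2
  have caz : cost f a z = 3 := by
    rw [cost, hz]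
    have : load a 1 = 3 := by omega
    rw [this]; exact hf2.2.2.1
  refine ⟨b, ?_, ?_, ⟨z, by simp [hc], by omega⟩⟩
  · intro j hj
    rw [hc] at hj
    simp at hj
    rw [hbd, Function.update_of_ne hj.2.2, hb2d, Function.update_of_ne hj.2.1,
      hb1d, Function.update_of_ne hj.1]
  · intro j hj
    rw [hc] at hj
    simp at hj
    rcases hj with rfl | rfl | rfl <;> omega

end Lemmas

lemma two_cases (a : Fin 6 → Fin 2) (h : load a 0 = 2) :
    (a 0 = 1 ∧ a 1 = 1) ∨ (a 2 = 1 ∧ a 3 = 1) ∨ (a 4 = 1 ∧ a 5 = 1) := by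
  rw [load_eq] at h
  rcases two (a 0) with h0|h0 <;> rcases two (a 1) with h1|h1 <;>
    rcases two (a 2) with h2|h2 <;> rcases two (a 3) with h3|h3 <;>
    rcases two (a 4) with h4|h4 <;> rcases two (a 5) with h5|h5 <;>
    simp [h0, h1, h2, h3, h4, h5] at h ⊢

lemma three_cases (a : Fin 6 → Fin 2) (h : load a 0 = 3) :
    (a 0 = 0 ∧ a 1 = 0) ∨ (a 2 = 0 ∧ a 3 = 0) ∨ (a 4 = 0 ∧ a 5 = 0) ∨
    (a 0 = 0 ∧ a 2 = 0 ∧ a 1 = 1) ∨ (a 1 = 0 ∧ a 2 = 0 ∧ a 0 = 1) ∨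
    (a 3 = 0 ∧ a 4 = 0 ∧ a 5 = 1) ∨ (a 3 = 0 ∧ a 5 = 0 ∧ a 4 = 1) := by
  rw [load_eq] at h
  rcases two (a 0) with h0|h0 <;> rcases two (a 1) with h1|h1 <;>
    rcases two (a 2) with h2|h2 <;> rcases two (a 3) with h3|h3 <;>
    rcases two (a 4) with h4|h4 <;> rcases two (a 5) with h5|h5 <;>
    simp [h0, h1, h2, h3, h4, h5] at h ⊢

/-- Non-existence of contiguous equilibrium with two resources: in the six-agent RSG with
`f₁(1)=1, f₁(2)=2, f₁(3)=4` and `f₂(1)=1, f₂(2)=2, f₂(3)=3, f₂(4)=4`, for the contiguous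
coalition structure consisting of the singletons together with
`{1,2},{3,4},{5,6},{1,2,3},{4,5,6}` (agents renamed `0,…,5`), no allocation is
`C`-stable. -/
theorem no_contiguous_equilibrium_two_resources
    (f : Fin 2 → ℕ → ℕ) (hmono : ∀ i, StrictMono (f i)) (hzero : ∀ i, f i 0 = 0)
    (hf1 : f 0 1 = 1 ∧ f 0 2 = 2 ∧ f 0 3 = 4)
    (hf2 : f 1 1 = 1 ∧ f 1 2 = 2 ∧ f 1 3 = 3 ∧ f 1 4 = 4)
    (C : Set (Finset (Fin 6)))
    (hC : C = {c : Finset (Fin 6) | ∃ j : Fin 6, c = {j}} ∪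
      {{0, 1}, {2, 3}, {4, 5}, {0, 1, 2}, {3, 4, 5}}) :
    ∀ a : Fin 6 → Fin 2, ∃ c ∈ C, ¬ cStable f a c := by
  intro a
  have hsum := loadsum a
  have hcase : load a 0 ≤ 1 ∨ load a 0 = 2 ∨ load a 0 = 3 ∨ 4 ≤ load a 0 := by omega
  rcases hcase with h | h | h | h
  · obtain ⟨x, hx⟩ := exists_on a 1 (by omega)
    exact ⟨{x}, by rw [hC]; exact Or.inl ⟨x, rfl⟩,
      single_dev1 f a hmono hf1 hf2 x hx (by omega)⟩
  · rcases two_cases a h with ⟨p, q⟩ | ⟨p, q⟩ | ⟨p, q⟩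
    · exact ⟨{0, 1}, by rw [hC]; right; simp,
        pair_dev_on1 f a hf1 hf2 0 1 (by decide) p q h⟩
    · exact ⟨{2, 3}, by rw [hC]; right; simp,
        pair_dev_on1 f a hf1 hf2 2 3 (by decide) p q h⟩
    · exact ⟨{4, 5}, by rw [hC]; right; simp,
        pair_dev_on1 f a hf1 hf2 4 5 (by decide) p q h⟩
  · rcases three_cases a h with ⟨p, q⟩ | ⟨p, q⟩ | ⟨p, q⟩ | ⟨p, q, r⟩ | ⟨p, q, r⟩ |
      ⟨p, q, r⟩ | ⟨p, q, r⟩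
    · exact ⟨{0, 1}, by rw [hC]; right; simp,
        pair_dev_on0 f a hf1 hf2 0 1 (by decide) p q h⟩
    · exact ⟨{2, 3}, by rw [hC]; right; simp,
        pair_dev_on0 f a hf1 hf2 2 3 (by decide) p q h⟩
    · exact ⟨{4, 5}, by rw [hC]; right; simp,
        pair_dev_on0 f a hf1 hf2 4 5 (by decide) p q h⟩
    · exact ⟨{0, 1, 2}, by rw [hC]; right; simp,
        triple_dev f a hf1 hf2 _ 0 2 1 (by decide) (by decide) (by decide)
          (by decide) p q r h⟩
    · exact ⟨{0, 1, 2}, by rw [hC]; right; simp,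
        triple_dev f a hf1 hf2 _ 1 2 0 (by decide) (by decide) (by decide)
          (by decide) p q r h⟩
    · exact ⟨{3, 4, 5}, by rw [hC]; right; simp,
        triple_dev f a hf1 hf2 _ 3 4 5 (by decide) (by decide) (by decide)
          (by decide) p q r h⟩
    · exact ⟨{3, 4, 5}, by rw [hC]; right; simp,
        triple_dev f a hf1 hf2 _ 3 5 4 (by decide) (by decide) (by decide)
          (by decide) p q r h⟩
  · obtain ⟨x, hx⟩ := exists_on a 0 (by omega)
    exact ⟨{x}, by rw [hC]; exact Or.inl ⟨x, rfl⟩,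
      single_dev0 f a hmono hf1 hf2 x hx h⟩
end
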